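/- arXiv:1208.4974 — 4 statements merged into one kernel-verified Lean document; each statement's English description precedes it below -/
import Mathlib

section
/- Let E be a countable set, let P and P̃ be irreducible stochastic matrices on E, and let π and ν be invariant probability vectors for P and P̃ respectively. Let i₀ ∈ E and suppose P satisfies the drift condition D1(V,{i₀}) with a bounded nonnegative function V. Then ‖ν − π‖ ≤ 2 (sup_i V(i))² · ‖P̃ − P‖. -/
open scoped Classical ENNReal NNReal
open Filter MeasureTheory

noncomputable section

variable {E : Type*}

def matPow (P : E → E → ℝ) : ℕ → E → E → ℝ
  | 0 => fun i j => if i = j then (1 : ℝ) else 0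
  | n + 1 => fun i j => ∑' k, matPow P n i k * P k j

def IsStochastic (P : E → E → ℝ) : Prop :=
  (∀ i j, 0 ≤ P i j) ∧ ∀ i, ∑' j, P i j = 1

def IsIrred (P : E → E → ℝ) : Prop :=
  ∀ i j, ∃ n, 1 ≤ n ∧ 0 < matPow P n i j

def IsProbVec (π : E → ℝ) : Prop :=
  (∀ i, 0 ≤ π i) ∧ ∑' i, π i = 1

def InvariantFor (π : E → ℝ) (P : E → E → ℝ) : Prop :=
  ∀ j, HasSum (fun i => π i * P i j) (π j)

def vecNorm (μ : E → ℝ) : ℝ := ∑' i, |μ i|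

def rowSumNorm (L : E → E → ℝ) : ℝ := ⨆ i, ∑' j, |L i j|

def ergCoeff (B : E → E → ℝ) : ℝ :=
  (1 / 2) * ⨆ p : E × E, ∑' k, |B p.1 k - B p.2 k|

def IsIntensity (Q : E → E → ℝ) : Prop :=
  (∀ i j, i ≠ j → 0 ≤ Q i j) ∧ ∀ i, HasSum (Q i) 0

def UnifBdd (Q : E → E → ℝ) : Prop := ∃ M : ℝ, ∀ i, -Q i i ≤ M

def QIrred (Q : E → E → ℝ) : Prop :=
  ∀ i j, i ≠ j → ∃ (r : ℕ) (k : ℕ → E), 1 ≤ r ∧ k 0 = i ∧ k r = j ∧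
    ∀ s < r, 0 < Q (k s) (k (s + 1))

def QInvariant (π : E → ℝ) (Q : E → E → ℝ) : Prop :=
  ∀ j, HasSum (fun i => π i * Q i j) 0

def transP (Q : E → E → ℝ) (t : ℝ) : E → E → ℝ :=
  fun i j => ∑' n : ℕ, t ^ n / (Nat.factorial n : ℝ) * matPow Q n i j

def qErgCoeff (Q : E → E → ℝ) : ℝ :=
  (1 / 2) * ⨅ p : {p : E × E // p.1 ≠ p.2},
    (|Q p.val.1 p.val.1 - Q p.val.2 p.val.1| + |Q p.val.1 p.val.2 - Q p.val.2 p.val.2|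
      - ∑' s : E, if s ≠ p.val.1 ∧ s ≠ p.val.2 then |Q p.val.1 s - Q p.val.2 s| else 0)

def vVecNorm (V : E → ℝ) (μ : E → ℝ) : ℝ≥0∞ := ∑' i, ENNReal.ofReal (|μ i| * V i)

def vMatNorm (V : E → ℝ) (L : E → E → ℝ) : ℝ≥0∞ :=
  ⨆ i, (∑' j, ENNReal.ofReal (|L i j| * V j)) / ENNReal.ofReal (V i)

def vOneNorm (V : E → ℝ) : ℝ≥0∞ := ⨆ i, 1 / ENNReal.ofReal (V i)

/-!
Test `ν - π` against `g = s - π s`, where `s = sign (ν - π)`, so that `‖ν - π‖ = ν g` and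
`π g = 0`. The drift condition makes the Neumann series `h = ∑ₙ Tⁿ g` of the chain killed at `i₀`
converge, with `|h| ≤ 2 V` and `h(i₀) = 0`, since `∑ₙ Tⁿ 1_{≠ i₀} ≤ V`; thus `h - P h = g` off
`i₀`. The drift also forces `π i₀ > 0`, and as `π (h - P h) = 0 = π g` the Poisson equation
`h - P h = g` holds at `i₀` too. Hence `ν g = ν (h - P h) = ν ((P̃ - P) h) ≤ ‖h‖_∞ ‖P̃ - P‖`,
and `‖h‖_∞ ≤ 2 (sup V)²` because `V ≥ 1` off `i₀`.
-/

section WeightedSums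

variable {ι : Type*} {p w w' : ι → ℝ} {C : ℝ}

theorem summable_of_tsum_eq_one (hp : ∑' i, p i = 1) : Summable p := by
  by_contra hns
  rw [tsum_eq_zero_of_not_summable hns] at hp
  exact zero_ne_one hp

theorem abs_tsum_le_tsum_abs (hw : Summable fun i => |w i|) : |∑' i, w i| ≤ ∑' i, |w i| := by
  simpa only [Real.norm_eq_abs] using
    norm_tsum_le_tsum_norm (f := w) (by simpa only [Real.norm_eq_abs])

theorem tsum_comm_of_abs_le {α β : Type*} {F G : α → β → ℝ} (hFG : ∀ a b, |F a b| ≤ G a b)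
    (hG : ∀ a, Summable (G a)) (hG' : Summable fun a => ∑' b, G a b) :
    ∑' a, ∑' b, F a b = ∑' b, ∑' a, F a b := by
  have hGu : Summable (Function.uncurry G) :=
    (summable_prod_of_nonneg fun q => (abs_nonneg _).trans (hFG q.1 q.2)).2 ⟨hG, hG'⟩
  exact (Summable.tsum_comm (hGu.of_norm_bounded fun q => hFG q.1 q.2)).symm

theorem summable_mul_of_abs_le (hp0 : ∀ i, 0 ≤ p i) (hp : Summable p) (hw : ∀ i, |w i| ≤ C) :
    Summable fun i => p i * w i :=
  hp.mul_right C |>.of_norm_bounded fun i => by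
    rw [Real.norm_eq_abs, abs_mul, abs_of_nonneg (hp0 i)]
    exact mul_le_mul_of_nonneg_left (hw i) (hp0 i)

theorem abs_tsum_mul_le_tsum_mul (hp0 : ∀ i, 0 ≤ p i) (hp : Summable p) (hw : ∀ i, |w i| ≤ w' i)
    (hw' : ∀ i, w' i ≤ C) : |∑' i, p i * w i| ≤ ∑' i, p i * w' i := by
  have habs : ∀ i, |p i * w i| ≤ p i * w' i := fun i => by
    rw [abs_mul, abs_of_nonneg (hp0 i)]
    exact mul_le_mul_of_nonneg_left (hw i) (hp0 i)
  have hsw' : Summable fun i => p i * w' i :=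
    summable_mul_of_abs_le hp0 hp fun i => by
      rw [abs_of_nonneg ((abs_nonneg _).trans (hw i))]; exact hw' i
  have hsabs := hsw'.of_nonneg_of_le (fun _ => abs_nonneg _) habs
  exact (abs_tsum_le_tsum_abs hsabs).trans (Summable.tsum_le_tsum habs hsabs hsw')

theorem abs_tsum_mul_le (hp0 : ∀ i, 0 ≤ p i) (hp : ∑' i, p i = 1) (hw : ∀ i, |w i| ≤ C) :
    |∑' i, p i * w i| ≤ C := by
  simpa only [tsum_mul_right, hp, one_mul] using
    abs_tsum_mul_le_tsum_mul hp0 (summable_of_tsum_eq_one hp) hw (fun _ => le_refl C)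

theorem tsum_mul_sub (hp0 : ∀ i, 0 ≤ p i) (hp : Summable p) (hw : ∀ i, |w i| ≤ C) {D : ℝ}
    (hw' : ∀ i, |w' i| ≤ D) :
    ∑' i, p i * (w i - w' i) = ∑' i, p i * w i - ∑' i, p i * w' i := by
  simp_rw [mul_sub]
  exact (summable_mul_of_abs_le hp0 hp hw).tsum_sub (summable_mul_of_abs_le hp0 hp hw')

theorem tsum_mul_sub_const (hp0 : ∀ i, 0 ≤ p i) (hp : ∑' i, p i = 1) (hw : ∀ i, |w i| ≤ C)
    (c : ℝ) :
    ∑' i, p i * (w i - c) = ∑' i, p i * w i - c := by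
  rw [tsum_mul_sub hp0 (summable_of_tsum_eq_one hp) hw (fun _ => le_refl |c|), tsum_mul_right,
    hp, one_mul]

end WeightedSums

theorem IsStochastic.summable_row {P : E → E → ℝ} (hP : IsStochastic P) (i : E) :
    Summable (P i) :=
  summable_of_tsum_eq_one (hP.2 i)

theorem IsProbVec.summable {μ : E → ℝ} (hμ : IsProbVec μ) : Summable μ :=
  summable_of_tsum_eq_one hμ.2

theorem tsum_mul_tsum_mul_of_invariant {μ : E → ℝ} {K : E → E → ℝ} (hK : IsStochastic K)
    (hμ0 : ∀ i, 0 ≤ μ i) (hμ : Summable μ) (hinv : InvariantFor μ K) {w : E → ℝ} {C : ℝ}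
    (hw : ∀ j, |w j| ≤ C) :
    ∑' i, μ i * ∑' j, K i j * w j = ∑' j, μ j * w j := by
  have hdom : ∀ i j, |μ i * K i j * w j| ≤ μ i * K i j * C := fun i j => by
    rw [abs_mul, abs_of_nonneg (mul_nonneg (hμ0 i) (hK.1 i j))]
    exact mul_le_mul_of_nonneg_left (hw j) (mul_nonneg (hμ0 i) (hK.1 i j))
  have hrow : ∀ i, ∑' j, μ i * K i j * C = μ i * C := fun i => by
    rw [tsum_mul_right, tsum_mul_left, hK.2 i, mul_one]
  calc ∑' i, μ i * ∑' j, K i j * w j = ∑' i, ∑' j, μ i * K i j * w j := by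
        simp_rw [← tsum_mul_left, mul_assoc]
    _ = ∑' j, ∑' i, μ i * K i j * w j :=
        tsum_comm_of_abs_le hdom (fun i => ((hK.summable_row i).mul_left (μ i)).mul_right C)
          (by simpa only [hrow] using hμ.mul_right C)
    _ = ∑' j, μ j * w j := by simp_rw [tsum_mul_right, (hinv _).tsum_eq]

def killedAt (P : E → E → ℝ) (i₀ : E) (w : E → ℝ) : E → ℝ :=
  fun i => if i = i₀ then 0 else ∑' j, P i j * w j

section KilledAt

variable {P : E → E → ℝ} {i₀ i : E} {w w' : E → ℝ} {C : ℝ}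

@[simp]
theorem killedAt_self : killedAt P i₀ w i₀ = 0 := if_pos rfl

theorem killedAt_of_ne (hi : i ≠ i₀) : killedAt P i₀ w i = ∑' j, P i j * w j := if_neg hi

theorem killedAt_const_mul (c : ℝ) :
    killedAt P i₀ (fun j => c * w j) i = c * killedAt P i₀ w i := by
  by_cases hi : i = i₀
  · simp [hi]
  · simp only [killedAt_of_ne hi, mul_left_comm _ c, tsum_mul_left]

theorem killedAt_nonneg (hP : IsStochastic P) (hw : ∀ j, 0 ≤ w j) : 0 ≤ killedAt P i₀ w i := by
  by_cases hi : i = i₀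
  · simp [hi]
  · exact (killedAt_of_ne hi).symm ▸ tsum_nonneg fun j => mul_nonneg (hP.1 i j) (hw j)

theorem abs_killedAt_le (hP : IsStochastic P) (hw : ∀ j, |w j| ≤ C) : |killedAt P i₀ w i| ≤ C := by
  by_cases hi : i = i₀
  · simpa [hi] using (abs_nonneg _).trans (hw i₀)
  · exact (killedAt_of_ne hi).symm ▸ abs_tsum_mul_le (hP.1 i) (hP.2 i) hw

theorem abs_killedAt_le_killedAt (hP : IsStochastic P) (hw : ∀ j, |w j| ≤ w' j)
    (hw' : ∀ j, w' j ≤ C) : |killedAt P i₀ w i| ≤ killedAt P i₀ w' i := by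
  by_cases hi : i = i₀
  · simp [hi]
  · simpa only [killedAt_of_ne hi] using
      abs_tsum_mul_le_tsum_mul (hP.1 i) (hP.summable_row i) hw hw'

theorem killedAt_mono (hP : IsStochastic P) (hw : ∀ j, 0 ≤ w j) (hww' : ∀ j, w j ≤ w' j)
    (hw' : ∀ j, w' j ≤ C) : killedAt P i₀ w i ≤ killedAt P i₀ w' i := by
  simpa only [abs_of_nonneg (killedAt_nonneg hP hw)] using
    abs_killedAt_le_killedAt hP (fun j => (abs_of_nonneg (hw j)).trans_le (hww' j)) hw'

theorem killedAt_finsetSum (hP : IsStochastic P) {W : ℕ → E → ℝ} (s : Finset ℕ)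
    (hW : ∀ n j, |W n j| ≤ C) :
    killedAt P i₀ (fun j => ∑ n ∈ s, W n j) i = ∑ n ∈ s, killedAt P i₀ (W n) i := by
  by_cases hi : i = i₀
  · simp [hi]
  · simp only [killedAt_of_ne hi, Finset.mul_sum]
    exact Summable.tsum_finsetSum fun n _ =>
      summable_mul_of_abs_le (hP.1 i) (hP.summable_row i) (hW n)

theorem killedAt_tsum (hP : IsStochastic P) {W D : ℕ → E → ℝ} (hWD : ∀ n j, |W n j| ≤ D n j)
    (hD : ∀ n j, D n j ≤ C) (hDs : Summable fun n => killedAt P i₀ (D n) i) :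
    killedAt P i₀ (fun j => ∑' n, W n j) i = ∑' n, killedAt P i₀ (W n) i := by
  by_cases hi : i = i₀
  · simp [hi]
  simp only [killedAt_of_ne hi] at hDs ⊢
  simp_rw [← tsum_mul_left]
  refine (tsum_comm_of_abs_le (G := fun n j => P i j * D n j) (fun n j => ?_) (fun n => ?_)
    hDs).symm
  · rw [abs_mul, abs_of_nonneg (hP.1 i j)]
    exact mul_le_mul_of_nonneg_left (hWD n j) (hP.1 i j)
  · exact summable_mul_of_abs_le (hP.1 i) (hP.summable_row i) fun j => by
      rw [abs_of_nonneg ((abs_nonneg _).trans (hWD n j))]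
      exact hD n j

end KilledAt

section Poisson

variable {P : E → E → ℝ} {i₀ : E} {V : E → ℝ}

theorem iterate_killedAt_mem_Icc (hP : IsStochastic P) {u : E → ℝ} (hu : ∀ j, u j ∈ Set.Icc 0 1)
    (n : ℕ) (j : E) : (killedAt P i₀)^[n] u j ∈ Set.Icc 0 1 := by
  induction n generalizing j with
  | zero => exact hu j
  | succ n ih =>
    rw [Function.iterate_succ_apply']
    refine ⟨killedAt_nonneg hP fun k => (ih k).1, (abs_le.1 (abs_killedAt_le hP fun k => ?_)).2⟩
    rw [abs_of_nonneg (ih k).1]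
    exact (ih k).2

theorem abs_iterate_killedAt_le (hP : IsStochastic P) {u w : E → ℝ} {C : ℝ} (hC : 0 ≤ C)
    (hu : ∀ j, u j ∈ Set.Icc 0 1) (hw : ∀ j, |w j| ≤ C * u j) (n : ℕ) (j : E) :
    |(killedAt P i₀)^[n] w j| ≤ C * (killedAt P i₀)^[n] u j := by
  induction n generalizing j with
  | zero => exact hw j
  | succ n ih =>
    simp only [Function.iterate_succ_apply', ← killedAt_const_mul]
    exact abs_killedAt_le_killedAt hP ih fun k =>
      mul_le_of_le_one_right hC (iterate_killedAt_mem_Icc hP hu n k).2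

theorem sum_range_iterate_killedAt_le (hP : IsStochastic P) (hV0 : ∀ j, 0 ≤ V j)
    (hVbd : BddAbove (Set.range V)) (hdrift : ∀ i, i ≠ i₀ → ∑' j, P i j * V j ≤ V i - 1)
    (N : ℕ) (i : E) :
    ∑ n ∈ Finset.range N, (killedAt P i₀)^[n] (fun j => if j = i₀ then 0 else 1) i ≤ V i := by
  set u : E → ℝ := fun j => if j = i₀ then 0 else 1
  have hu : ∀ j, u j ∈ Set.Icc 0 1 := fun j => by by_cases hj : j = i₀ <;> simp [u, hj]
  have hB := iterate_killedAt_mem_Icc (i₀ := i₀) hP hu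
  obtain ⟨M, hM⟩ := hVbd
  induction N generalizing i with
  | zero => simpa using hV0 i
  | succ N ih =>
    have hT : ∑ n ∈ Finset.range N, (killedAt P i₀)^[n + 1] u i ≤ killedAt P i₀ V i := by
      simp only [Function.iterate_succ_apply']
      rw [← killedAt_finsetSum hP _ fun n j => abs_le.2 ⟨by linarith [(hB n j).1], (hB n j).2⟩]
      exact killedAt_mono hP (fun j => Finset.sum_nonneg fun n _ => (hB n j).1) ih
        fun j => hM ⟨j, rfl⟩
    rw [Finset.sum_range_succ', Function.iterate_zero_apply]
    by_cases hi : i = i₀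
    · simp only [killedAt_self, hi, u, if_true, add_zero] at hT ⊢
      exact hT.trans (hV0 i₀)
    · rw [killedAt_of_ne hi] at hT
      simp only [u, if_neg hi]
      linarith [hdrift i hi]

theorem exists_poisson_solution (hP : IsStochastic P) (hV0 : ∀ j, 0 ≤ V j)
    (hVbd : BddAbove (Set.range V)) (hdrift : ∀ i, i ≠ i₀ → ∑' j, P i j * V j ≤ V i - 1)
    {g : E → ℝ} {C : ℝ} (hg : ∀ i, |g i| ≤ C) :
    ∃ h : E → ℝ, h i₀ = 0 ∧ (∀ i, |h i| ≤ C * V i) ∧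
      ∀ i, i ≠ i₀ → h i = g i + ∑' j, P i j * h j := by
  set u : E → ℝ := fun j => if j = i₀ then 0 else 1
  set B : ℕ → E → ℝ := fun n => (killedAt P i₀)^[n] u
  set A : ℕ → E → ℝ := fun n => (killedAt P i₀)^[n] fun j => if j = i₀ then 0 else g j
  have hC : 0 ≤ C := (abs_nonneg _).trans (hg i₀)
  have hu : ∀ j, u j ∈ Set.Icc 0 1 := fun j => by by_cases hj : j = i₀ <;> simp [u, hj]
  have hB : ∀ n j, B n j ∈ Set.Icc 0 1 := iterate_killedAt_mem_Icc hP hu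
  have hAB : ∀ n j, |A n j| ≤ C * B n j := abs_iterate_killedAt_le hP hC hu fun j => by
    by_cases hj : j = i₀ <;> simp [u, hj, hg j]
  have hBs : ∀ i, Summable fun n => B n i := fun i =>
    summable_of_sum_range_le (fun n => (hB n i).1)
      (sum_range_iterate_killedAt_le hP hV0 hVbd hdrift · i)
  have hBV : ∀ i, ∑' n, B n i ≤ V i := fun i =>
    Real.tsum_le_of_sum_range_le (fun n => (hB n i).1)
      (sum_range_iterate_killedAt_le hP hV0 hVbd hdrift · i)
  have hAs : ∀ i, Summable fun n => A n i := fun i =>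
    ((hBs i).mul_left C).of_norm_bounded fun n => hAB n i
  refine ⟨fun i => ∑' n, A n i, ?_, fun i => ?_, fun i hi => ?_⟩
  · have hA : ∀ n, A n i₀ = 0 := fun n => by
      cases n <;> simp [A, Function.iterate_succ_apply']
    simp [hA]
  · calc |∑' n, A n i| ≤ ∑' n, |A n i| := abs_tsum_le_tsum_abs (hAs i).abs
      _ ≤ ∑' n, C * B n i :=
          Summable.tsum_le_tsum (fun n => hAB n i) (hAs i).abs ((hBs i).mul_left C)
      _ ≤ C * V i := by rw [tsum_mul_left]; exact mul_le_mul_of_nonneg_left (hBV i) hC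
  · have hTB : Summable fun n => killedAt P i₀ (fun j => C * B n j) i := by
      simp only [killedAt_const_mul, B, ← Function.iterate_succ_apply' (killedAt P i₀)]
      exact ((hBs i).comp_injective (add_left_injective 1)).mul_left C
    calc ∑' n, A n i = A 0 i + ∑' n, killedAt P i₀ (A n) i := by
          simpa only [A, Function.iterate_succ_apply'] using (hAs i).tsum_eq_zero_add
      _ = g i + killedAt P i₀ (fun j => ∑' n, A n j) i := by
          rw [killedAt_tsum hP hAB (fun n j => mul_le_of_le_one_right hC (hB n j).2) hTB]
          simp [A, hi]
      _ = g i + ∑' j, P i j * ∑' n, A n j := by rw [killedAt_of_ne hi]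

end Poisson

section Invariant

variable {P : E → E → ℝ} {π : E → ℝ} {i₀ : E}

theorem pos_of_invariantFor_of_drift (hP : IsStochastic P) (hπ : IsProbVec π)
    (hinv : InvariantFor π P) {V : E → ℝ} (hV0 : ∀ j, 0 ≤ V j) (hVbd : BddAbove (Set.range V))
    (hdrift : ∀ i, i ≠ i₀ → ∑' j, P i j * V j ≤ V i - 1) : 0 < π i₀ := by
  obtain ⟨M, hM⟩ := hVbd
  have hV : ∀ j, |V j| ≤ M := fun j => (abs_of_nonneg (hV0 j)).trans_le (hM ⟨j, rfl⟩)
  have hPV : ∀ i, |∑' j, P i j * V j| ≤ M := fun i => abs_tsum_mul_le (hP.1 i) (hP.2 i) hV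
  by_contra hnot
  have hπi₀ : π i₀ = 0 := le_antisymm (not_lt.1 hnot) (hπ.1 i₀)
  -- then `π (P V) ≤ π (V - 1) = π V - 1`, while invariance gives `π (P V) = π V`
  have hterm : ∀ i, π i * ∑' j, P i j * V j ≤ π i * (V i - 1) := fun i => by
    by_cases hi : i = i₀
    · simp [hi, hπi₀]
    · exact mul_le_mul_of_nonneg_left (hdrift i hi) (hπ.1 i)
  have hsum := Summable.tsum_le_tsum hterm (summable_mul_of_abs_le hπ.1 hπ.summable hPV)
    (summable_mul_of_abs_le hπ.1 hπ.summable fun i =>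
      (abs_sub _ _).trans (add_le_add (hV i) abs_one.le))
  rw [tsum_mul_tsum_mul_of_invariant hP hπ.1 hπ.summable hinv hV,
    tsum_mul_sub_const hπ.1 hπ.2 hV] at hsum
  linarith

theorem poisson_eq_of_invariantFor (hP : IsStochastic P) (hπ : IsProbVec π)
    (hinv : InvariantFor π P) (hπi₀ : 0 < π i₀) {g h : E → ℝ} {C K : ℝ}
    (hg : ∀ i, |g i| ≤ C) (hh : ∀ i, |h i| ≤ K) (hπg : ∑' i, π i * g i = 0)
    (hpoisson : ∀ i, i ≠ i₀ → h i = g i + ∑' j, P i j * h j) (i : E) :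
    h i - ∑' j, P i j * h j = g i := by
  set Ph : E → ℝ := fun i => ∑' j, P i j * h j
  have hPh : ∀ i, |Ph i| ≤ K := fun i => abs_tsum_mul_le (hP.1 i) (hP.2 i) hh
  have hdefect : ∑' i, π i * (h i - Ph i - g i) = π i₀ * (h i₀ - Ph i₀ - g i₀) :=
    tsum_eq_single i₀ fun i hi => by simp [hpoisson i hi, Ph]
  have hdefect_zero : ∑' i, π i * (h i - Ph i - g i) = 0 := by
    rw [tsum_mul_sub hπ.1 hπ.summable (w := fun i => h i - Ph i)
        (fun i => (abs_sub _ _).trans (add_le_add (hh i) (hPh i))) hg,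
      tsum_mul_sub hπ.1 hπ.summable hh hPh, hπg,
      tsum_mul_tsum_mul_of_invariant hP hπ.1 hπ.summable hinv hh]
    ring
  by_cases hi : i = i₀
  · subst hi
    have := hdefect.symm.trans hdefect_zero
    rcases mul_eq_zero.1 this with h0 | h0
    · exact absurd h0 hπi₀.ne'
    · linarith
  · rw [hpoisson i hi]
    ring

end Invariant

theorem abs_sign_le_one (x : ℝ) : |(SignType.sign x : ℝ)| ≤ 1 := by
  rcases lt_trichotomy x 0 with hx | hx | hx <;> simp [hx]

theorem vecNorm_sub_eq_tsum_mul_sign {μ ν : E → ℝ} (hμ : Summable μ) (hν : Summable ν) :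
    vecNorm (fun i => ν i - μ i) =
      ∑' i, ν i * SignType.sign (ν i - μ i) - ∑' i, μ i * SignType.sign (ν i - μ i) := by
  have hsummable : ∀ {p : E → ℝ}, Summable p → Summable fun i => p i * SignType.sign (ν i - μ i) :=
    fun hp => hp.abs.of_norm_bounded fun i => by
      rw [Real.norm_eq_abs, abs_mul]
      exact mul_le_of_le_one_right (abs_nonneg _) (abs_sign_le_one _)
  rw [vecNorm, ← (hsummable hν).tsum_sub (hsummable hμ)]
  simp_rw [← sub_mul, self_mul_sign]

theorem IsStochastic.summable_abs_sub {P Pt : E → E → ℝ} (hP : IsStochastic P)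
    (hPt : IsStochastic Pt) (i : E) : Summable fun j => |Pt i j - P i j| :=
  ((hPt.summable_row i).add (hP.summable_row i)).of_nonneg_of_le (fun _ => abs_nonneg _)
    fun j => abs_sub_le_iff.2 ⟨by linarith [hP.1 i j], by linarith [hPt.1 i j]⟩

theorem tsum_abs_sub_le_rowSumNorm {P Pt : E → E → ℝ} (hP : IsStochastic P)
    (hPt : IsStochastic Pt) (i : E) :
    ∑' j, |Pt i j - P i j| ≤ rowSumNorm (fun i j => Pt i j - P i j) := by
  have hrow : ∀ i, ∑' j, |Pt i j - P i j| ≤ 2 := fun i => by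
    calc ∑' j, |Pt i j - P i j| ≤ ∑' j, (Pt i j + P i j) :=
          Summable.tsum_le_tsum
            (fun j => abs_sub_le_iff.2 ⟨by linarith [hP.1 i j], by linarith [hPt.1 i j]⟩)
            (hP.summable_abs_sub hPt i) ((hPt.summable_row i).add (hP.summable_row i))
      _ = 2 := by
          rw [(hPt.summable_row i).tsum_add (hP.summable_row i), hPt.2 i, hP.2 i]
          norm_num
  exact le_ciSup (f := fun i => ∑' j, |Pt i j - P i j|) ⟨2, Set.forall_mem_range.2 hrow⟩ i

theorem tsum_mul_sub_le_mul_rowSumNorm {P Pt : E → E → ℝ} {ν h : E → ℝ} {K : ℝ}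
    (hP : IsStochastic P) (hPt : IsStochastic Pt) (hν : IsProbVec ν) (hinv : InvariantFor ν Pt)
    (hh : ∀ i, |h i| ≤ K) :
    ∑' i, ν i * (h i - ∑' j, P i j * h j) ≤ K * rowSumNorm (fun i j => Pt i j - P i j) := by
  set δ := rowSumNorm (fun i j => Pt i j - P i j)
  have hPh : ∀ i, |∑' j, P i j * h j| ≤ K := fun i => abs_tsum_mul_le (hP.1 i) (hP.2 i) hh
  have hPth : ∀ i, |∑' j, Pt i j * h j| ≤ K := fun i => abs_tsum_mul_le (hPt.1 i) (hPt.2 i) hh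
  have hdiff : ∀ i, ∑' j, Pt i j * h j - ∑' j, P i j * h j ≤ K * δ := fun i => by
    have hK : 0 ≤ K := (abs_nonneg _).trans (hh i)
    have hs : ∀ {Q : E → E → ℝ}, IsStochastic Q → Summable fun j => Q i j * h j := fun hQ =>
      summable_mul_of_abs_le (hQ.1 i) (hQ.summable_row i) hh
    have hbound : ∀ j, (Pt i j - P i j) * h j ≤ |Pt i j - P i j| * K := fun j =>
      (le_abs_self _).trans <| (abs_mul _ _).trans_le <|
        mul_le_mul_of_nonneg_left (hh j) (abs_nonneg _)
    calc ∑' j, Pt i j * h j - ∑' j, P i j * h j = ∑' j, (Pt i j - P i j) * h j := by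
          simp_rw [sub_mul]; exact ((hs hPt).tsum_sub (hs hP)).symm
      _ ≤ ∑' j, |Pt i j - P i j| * K :=
          Summable.tsum_le_tsum hbound (by simpa only [sub_mul] using (hs hPt).sub (hs hP))
            ((hP.summable_abs_sub hPt i).mul_right K)
      _ ≤ K * δ := by
          rw [tsum_mul_right, mul_comm]
          exact mul_le_mul_of_nonneg_left (tsum_abs_sub_le_rowSumNorm hP hPt i) hK
  calc ∑' i, ν i * (h i - ∑' j, P i j * h j)
      = ∑' i, ν i * (∑' j, Pt i j * h j - ∑' j, P i j * h j) := by
        rw [tsum_mul_sub hν.1 hν.summable hh hPh, tsum_mul_sub hν.1 hν.summable hPth hPh,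
          tsum_mul_tsum_mul_of_invariant hPt hν.1 hν.summable hinv hh]
    _ ≤ ∑' i, ν i * (K * δ) :=
        Summable.tsum_le_tsum (fun i => mul_le_mul_of_nonneg_left (hdiff i) (hν.1 i))
          (summable_mul_of_abs_le hν.1 hν.summable fun i =>
            (abs_sub _ _).trans (add_le_add (hPth i) (hPh i)))
          (hν.summable.mul_right _)
    _ = K * δ := by rw [tsum_mul_right, hν.2, one_mul]

theorem stmt8_general {E : Type*} (P Pt : E → E → ℝ) (pi nu : E → ℝ)
    (i₀ : E) (V : E → ℝ)
    (hP : IsStochastic P) (hPt : IsStochastic Pt)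
    (hpi : IsProbVec pi) (hnu : IsProbVec nu)
    (hpiinv : InvariantFor pi P) (hnuinv : InvariantFor nu Pt)
    (hVnn : ∀ i, 0 ≤ V i) (hVbd : BddAbove (Set.range V))
    (hdrift : ∀ i, i ≠ i₀ → ∑' j, P i j * V j ≤ V i - 1) :
    vecNorm (fun i => nu i - pi i) ≤
      2 * (⨆ i, V i) ^ 2 * rowSumNorm (fun i j => Pt i j - P i j) := by
  set s : E → ℝ := fun i => SignType.sign (nu i - pi i)
  set c := ∑' i, pi i * s i
  have hs : ∀ i, |s i| ≤ 1 := fun i => abs_sign_le_one _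
  have hg : ∀ i, |s i - c| ≤ 2 := fun i =>
    (abs_sub _ _).trans (by linarith [hs i, abs_tsum_mul_le hpi.1 hpi.2 hs])
  obtain ⟨h, hhi₀, hhV, hpoisson⟩ := exists_poisson_solution hP hVnn hVbd hdrift hg
  have hh : ∀ i, |h i| ≤ 2 * (⨆ i, V i) ^ 2 := fun i => by
    by_cases hi : i = i₀
    · simp only [hi, hhi₀, abs_zero]
      positivity
    · have hPV : 0 ≤ ∑' j, P i j * V j := tsum_nonneg fun j => mul_nonneg (hP.1 i j) (hVnn j)
      have hV1 : 1 ≤ V i := by linarith [hdrift i hi]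
      nlinarith [hhV i, le_ciSup hVbd i]
  have hpoisson' := poisson_eq_of_invariantFor hP hpi hpiinv
    (pos_of_invariantFor_of_drift hP hpi hpiinv hVnn hVbd hdrift) hg hh
    (by rw [tsum_mul_sub_const hpi.1 hpi.2 hs, sub_self]) hpoisson
  calc vecNorm (fun i => nu i - pi i) = ∑' i, nu i * (s i - c) := by
        rw [vecNorm_sub_eq_tsum_mul_sign hpi.summable hnu.summable,
          tsum_mul_sub_const hnu.1 hnu.2 hs]
    _ = ∑' i, nu i * (h i - ∑' j, P i j * h j) := by simp_rw [hpoisson']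
    _ ≤ 2 * (⨆ i, V i) ^ 2 * rowSumNorm (fun i j => Pt i j - P i j) :=
        tsum_mul_sub_le_mul_rowSumNorm hP hPt hnu hnuinv hh

/-- under D1(V,{i₀}), ‖ν − π‖ ≤ 2(sup V)²·‖P̃ − P‖. -/
theorem stmt8 {E : Type*} [Countable E] (P Pt : E → E → ℝ) (pi nu : E → ℝ)
    (i₀ : E) (V : E → ℝ)
    (hP : IsStochastic P) (hPt : IsStochastic Pt)
    (hPirr : IsIrred P) (hPtirr : IsIrred Pt)
    (hpi : IsProbVec pi) (hnu : IsProbVec nu)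
    (hpiinv : InvariantFor pi P) (hnuinv : InvariantFor nu Pt)
    (hVnn : ∀ i, 0 ≤ V i) (hVbd : BddAbove (Set.range V)) (hV0 : V i₀ = 0)
    (hdrift : ∀ i, i ≠ i₀ → ∑' j, P i j * V j ≤ V i - 1) :
    vecNorm (fun i => nu i - pi i) ≤
      2 * (⨆ i, V i) ^ 2 * rowSumNorm (fun i j => Pt i j - P i j) :=
  stmt8_general P Pt pi nu i₀ V hP hPt hpi hnu hpiinv hnuinv hVnn hVbd hdrift

end
end

section
/- Let E be a countable set, P a stochastic matrix on E, π an invariant probability vector for P, and i₀ ∈ E. Suppose P satisfies the drift condition D2(V,λ,b,{i₀}) with a function V bounded away from zero, constants 0 < λ < 1 and 0 < b < ∞, and suppose ∑_i π(i)V(i) < ∞. Then ∑_i π(i)V(i) ≤ b·π(i₀)/(1 − λ) ≤ b/(1 − λ). -/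
open scoped Classical ENNReal NNReal
open Filter MeasureTheory

noncomputable section

variable {E : Type*}

/-- under D2(V,λ,b,{i₀}), π(V) ≤ b·π(i₀)/(1−λ) ≤ b/(1−λ). -/
theorem stmt9 {E : Type*} [Countable E] (P : E → E → ℝ) (pi : E → ℝ)
    (V : E → ℝ) (lam b : ℝ) (i₀ : E)
    (hP : IsStochastic P) (hpi : IsProbVec pi) (hpiinv : InvariantFor pi P)
    (hVpos : ∃ δ > (0 : ℝ), ∀ i, δ ≤ V i)
    (hlam0 : 0 < lam) (hlam1 : lam < 1) (hb : 0 < b)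
    (hdrift : ∀ i, ∑' j, P i j * V j ≤ lam * V i + (if i = i₀ then b else 0))
    (hsum : Summable fun i => pi i * V i) :
    (∑' i, pi i * V i) ≤ b * pi i₀ / (1 - lam) ∧
      b * pi i₀ / (1 - lam) ≤ b / (1 - lam) := by
  obtain ⟨δ, hδ, hV⟩ := hVpos
  have hV0 : ∀ i, 0 ≤ V i := fun i => hδ.le.trans (hV i)
  have hπ0 := hpi.1
  have hπsum : Summable pi := by
    by_contra h
    have h0 := tsum_eq_zero_of_not_summable h
    rw [hpi.2] at h0; exact one_ne_zero h0
  set S : ℝ≥0∞ := ∑' j, ENNReal.ofReal (pi j * V j) with hSdef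
  have hS_eq : S = ENNReal.ofReal (∑' j, pi j * V j) :=
    (ENNReal.ofReal_tsum_of_nonneg (fun j => mul_nonneg (hπ0 j) (hV0 j)) hsum).symm
  have hS_fin : S ≠ ⊤ := by rw [hS_eq]; exact ENNReal.ofReal_ne_top
  -- rewrite S via invariance
  have hstep1 : ∀ j, ENNReal.ofReal (pi j * V j)
      = ∑' i, ENNReal.ofReal (pi i * P i j * V j) := by
    intro j
    have hsumj : Summable fun i => pi i * P i j := (hpiinv j).summable
    have h1 : ENNReal.ofReal (pi j) = ∑' i, ENNReal.ofReal (pi i * P i j) := by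
      rw [← (hpiinv j).tsum_eq]
      exact ENNReal.ofReal_tsum_of_nonneg
        (fun i => mul_nonneg (hπ0 i) (hP.1 i j)) hsumj
    calc ENNReal.ofReal (pi j * V j)
        = ENNReal.ofReal (pi j) * ENNReal.ofReal (V j) := ENNReal.ofReal_mul (hπ0 j)
      _ = (∑' i, ENNReal.ofReal (pi i * P i j)) * ENNReal.ofReal (V j) := by rw [h1]
      _ = ∑' i, ENNReal.ofReal (pi i * P i j) * ENNReal.ofReal (V j) :=
          ENNReal.tsum_mul_right.symm
      _ = ∑' i, ENNReal.ofReal (pi i * P i j * V j) := by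
          refine tsum_congr fun i => ?_
          rw [← ENNReal.ofReal_mul (mul_nonneg (hπ0 i) (hP.1 i j))]
  set T : E → ℝ≥0∞ := fun i => ∑' j, ENNReal.ofReal (P i j * V j) with hTdef
  have hS2 : S = ∑' i, ENNReal.ofReal (pi i) * T i := by
    calc S = ∑' j, ∑' i, ENNReal.ofReal (pi i * P i j * V j) := tsum_congr hstep1
      _ = ∑' i, ∑' j, ENNReal.ofReal (pi i * P i j * V j) := ENNReal.tsum_comm
      _ = ∑' i, ENNReal.ofReal (pi i) * T i := by
          refine tsum_congr fun i => ?_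
          rw [hTdef]
          rw [← ENNReal.tsum_mul_left]
          refine tsum_congr fun j => ?_
          rw [← ENNReal.ofReal_mul (hπ0 i), mul_assoc]
  -- key bound
  have hkey : ∀ i, ENNReal.ofReal (pi i) * T i
      ≤ ENNReal.ofReal (pi i) * ENNReal.ofReal (lam * V i + (if i = i₀ then b else 0)) := by
    intro i
    rcases eq_or_lt_of_le (hπ0 i) with h0 | h0
    · simp [← h0]
    · have hTfin : T i ≠ ⊤ := by
        intro htop
        have hle : ENNReal.ofReal (pi i) * T i ≤ S := by
          rw [hS2]; exact ENNReal.le_tsum i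
        rw [htop, ENNReal.mul_top (by simp [ENNReal.ofReal_eq_zero]; linarith)] at hle
        exact hS_fin (top_le_iff.mp hle)
      have hgsum : Summable fun j => P i j * V j := by
        have := ENNReal.summable_toReal hTfin
        refine this.congr fun j => ?_
        exact ENNReal.toReal_ofReal (mul_nonneg (hP.1 i j) (hV0 j))
      have hTval : T i = ENNReal.ofReal (∑' j, P i j * V j) :=
        (ENNReal.ofReal_tsum_of_nonneg (fun j => mul_nonneg (hP.1 i j) (hV0 j)) hgsum).symm
      have : T i ≤ ENNReal.ofReal (lam * V i + (if i = i₀ then b else 0)) := by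
        rw [hTval]; exact ENNReal.ofReal_le_ofReal (hdrift i)
      exact mul_le_mul_right this _
  have hbound : S ≤ ENNReal.ofReal lam * S + ENNReal.ofReal (pi i₀ * b) := by
    calc S = ∑' i, ENNReal.ofReal (pi i) * T i := hS2
      _ ≤ ∑' i, ENNReal.ofReal (pi i)
            * ENNReal.ofReal (lam * V i + (if i = i₀ then b else 0)) :=
          ENNReal.tsum_le_tsum hkey
      _ = ∑' i, (ENNReal.ofReal lam * ENNReal.ofReal (pi i * V i)
            + (if i = i₀ then ENNReal.ofReal (pi i₀ * b) else 0)) := by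
          refine tsum_congr fun i => ?_
          rw [← ENNReal.ofReal_mul (hπ0 i), mul_add,
            ENNReal.ofReal_add (mul_nonneg (hπ0 i) (mul_nonneg hlam0.le (hV0 i)))
              (mul_nonneg (hπ0 i) (by split_ifs <;> simp [hb.le]))]
          congr 1
          · rw [← ENNReal.ofReal_mul hlam0.le]; ring_nf
          · split_ifs with h
            · subst h; simp
            · simp
      _ = ENNReal.ofReal lam * S + ENNReal.ofReal (pi i₀ * b) := by
          rw [ENNReal.tsum_add, ENNReal.tsum_mul_left, tsum_ite_eq]
  -- pass to reals
  set s : ℝ := ∑' i, pi i * V i with hsdef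
  have hs0 : 0 ≤ s := tsum_nonneg fun i => mul_nonneg (hπ0 i) (hV0 i)
  have hSto : S.toReal = s := by rw [hS_eq, ENNReal.toReal_ofReal hs0]
  have hpb0 : 0 ≤ pi i₀ * b := mul_nonneg (hπ0 i₀) hb.le
  have hreal : s ≤ lam * s + pi i₀ * b := by
    have hRfin : ENNReal.ofReal lam * S + ENNReal.ofReal (pi i₀ * b) ≠ ⊤ := by
      refine ENNReal.add_ne_top.mpr ⟨?_, ENNReal.ofReal_ne_top⟩
      exact ENNReal.mul_ne_top ENNReal.ofReal_ne_top hS_fin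
    have := ENNReal.toReal_mono hRfin hbound
    rwa [ENNReal.toReal_add (ENNReal.mul_ne_top ENNReal.ofReal_ne_top hS_fin)
      ENNReal.ofReal_ne_top, ENNReal.toReal_mul, ENNReal.toReal_ofReal hlam0.le,
      ENNReal.toReal_ofReal hpb0, hSto] at this
  have hlampos : (0:ℝ) < 1 - lam := by linarith
  have hπle1 : pi i₀ ≤ 1 := by
    rw [← hpi.2]
    exact Summable.le_tsum hπsum i₀ fun j _ => hπ0 j
  constructor
  · rw [le_div_iff₀ hlampos]; nlinarith
  · gcongr
    nlinarith

end
end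

section
/- Let E be a countable set, let Q and Q̃ be irreducible, uniformly bounded intensity matrices on E, and let π and ν be invariant probability vectors for Q and Q̃ respectively. For each k ∈ E let δ_k = inf_{i ≠ k} Q(i,k). If ∑_k δ_k > 0, then ‖ν − π‖ ≤ ‖Q̃ − Q‖ / (∑_k δ_k). -/
open scoped Classical ENNReal NNReal
open Filter MeasureTheory

noncomputable section

variable {E : Type*}

/-!
Write `μ = ν - π`. Invariance gives `μ Q = ν (Q - Q̃)`, whose norm is at most `‖Q̃ - Q‖`. On the
other hand `μ` has total mass zero, so `μ Q = μ B - C μ` for `B = Q + C I - 𝟙 δ`, which is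
entrywise nonnegative once `C` is large (uniform boundedness) and has all row sums `C - ∑ δ`.
A nonnegative matrix contracts `ℓ¹` by its maximal row sum, so
`C ‖μ‖ ≤ ‖μ B‖ + ‖μ Q‖ ≤ (C - ∑ δ) ‖μ‖ + ‖Q̃ - Q‖`.
-/

lemma IsProbVec.hasSum {π : E → ℝ} (hπ : IsProbVec π) : HasSum π 1 := by
  obtain ⟨-, hπ1⟩ := hπ
  have hπs : Summable π := by
    by_contra h
    rw [tsum_eq_zero_of_not_summable h] at hπ1
    exact zero_ne_one hπ1
  exact hπ1 ▸ hπs.hasSum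

lemma IsProbVec.vecNorm_eq_one {π : E → ℝ} (hπ : IsProbVec π) : vecNorm π = 1 := by
  simp only [vecNorm, abs_of_nonneg (hπ.1 _)]
  exact hπ.2

lemma vecNorm_neg (μ : E → ℝ) : vecNorm (fun i => -μ i) = vecNorm μ := by
  simp only [vecNorm, abs_neg]

namespace IsIntensity

variable {Q Q' : E → E → ℝ}

lemma diag_nonpos (hQ : IsIntensity Q) (i : E) : Q i i ≤ 0 := by
  have hoff := hasSum_ite_sub_hasSum (hQ.2 i) i
  have := hoff.nonneg fun j => by
    by_cases h : j = i
    · simp [h]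
    · simpa [h] using hQ.1 i j (Ne.symm h)
  linarith

lemma hasSum_abs (hQ : IsIntensity Q) (i : E) : HasSum (fun j => |Q i j|) (-2 * Q i i) := by
  have h := (hQ.2 i).add (hasSum_ite_eq i (-2 * Q i i))
  rw [zero_add] at h
  convert h using 2 with j
  by_cases hj : j = i
  · subst hj
    simp only [abs_of_nonpos (hQ.diag_nonpos j), if_true]
    ring
  · simp [hj, abs_of_nonneg (hQ.1 i j (Ne.symm hj))]

lemma summable_abs_sub (hQ : IsIntensity Q) (hQ' : IsIntensity Q') (i : E) :
    Summable fun j => |Q' i j - Q i j| :=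
  .of_nonneg_of_le (fun _ => abs_nonneg _) (fun _ => abs_sub _ _)
    ((hQ'.hasSum_abs i).add (hQ.hasSum_abs i)).summable

lemma tsum_abs_sub_le (hQ : IsIntensity Q) (hQ' : IsIntensity Q') (i : E) :
    ∑' j, |Q' i j - Q i j| ≤ -2 * Q' i i + -2 * Q i i :=
  hasSum_le (fun _ => abs_sub _ _) (hQ.summable_abs_sub hQ' i).hasSum
    ((hQ'.hasSum_abs i).add (hQ.hasSum_abs i))

lemma tsum_abs_sub_le_rowSumNorm (hQ : IsIntensity Q) (hQ' : IsIntensity Q')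
    (hQb : UnifBdd Q) (hQ'b : UnifBdd Q') (i : E) :
    ∑' j, |Q' i j - Q i j| ≤ rowSumNorm fun i j => Q' i j - Q i j := by
  obtain ⟨M, hM⟩ := hQb
  obtain ⟨M', hM'⟩ := hQ'b
  refine le_ciSup (f := fun i => ∑' j, |Q' i j - Q i j|) ⟨2 * M' + 2 * M, ?_⟩ i
  rintro _ ⟨k, rfl⟩
  linarith [hQ.tsum_abs_sub_le hQ' k, hM k, hM' k]

lemma iInf_offDiag_nonneg (hQ : IsIntensity Q) (k : E) :
    0 ≤ ⨅ i : {i : E // i ≠ k}, Q i.val k :=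
  Real.iInf_nonneg fun i => hQ.1 _ _ i.2

lemma iInf_offDiag_le (hQ : IsIntensity Q) {i k : E} (h : i ≠ k) :
    (⨅ i : {i : E // i ≠ k}, Q i.val k) ≤ Q i k :=
  ciInf_le ⟨0, by rintro _ ⟨i', rfl⟩; exact hQ.1 _ _ i'.2⟩ (⟨i, h⟩ : {i : E // i ≠ k})

end IsIntensity

lemma QInvariant.hasSum_sub_mul {Q Q' : E → E → ℝ} {π ν : E → ℝ} (hπ : QInvariant π Q)
    (hν : QInvariant ν Q') {j : E} (h : Summable fun i => ν i * (Q' i j - Q i j)) :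
    HasSum (fun i => (ν i - π i) * Q i j) (-∑' i, ν i * (Q' i j - Q i j)) := by
  have hsum := ((hν j).sub h.hasSum).sub (hπ j)
  rw [zero_sub, sub_zero] at hsum
  have hfun : (fun i => (ν i - π i) * Q i j)
      = fun i => ν i * Q' i j - ν i * (Q' i j - Q i j) - π i * Q i j := by
    funext i
    ring
  rw [hfun]
  exact hsum

section VecMul

variable {μ : E → ℝ} {L : E → E → ℝ} {c : ℝ}

lemma summable_abs_mul_abs (hμ : Summable fun i => |μ i|)
    (hL : ∀ i, Summable fun j => |L i j|) (hc : ∀ i, ∑' j, |L i j| ≤ c) :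
    Summable fun p : E × E => |μ p.1| * |L p.1 p.2| := by
  have hF0 : 0 ≤ fun p : E × E => |μ p.1| * |L p.1 p.2| := fun p =>
    mul_nonneg (abs_nonneg _) (abs_nonneg _)
  refine (summable_prod_of_nonneg hF0).2 ⟨fun i => (hL i).mul_left |μ i|, ?_⟩
  refine .of_nonneg_of_le (fun i => tsum_nonneg fun j => hF0 (i, j)) (fun i => ?_)
    (hμ.mul_right c)
  rw [show ∑' j, |μ i| * |L i j| = |μ i| * ∑' j, |L i j| from tsum_mul_left]
  exact mul_le_mul_of_nonneg_left (hc i) (abs_nonneg _)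

lemma summable_abs_mul_abs_apply (hμ : Summable fun i => |μ i|)
    (hL : ∀ i, Summable fun j => |L i j|) (hc : ∀ i, ∑' j, |L i j| ≤ c) (j : E) :
    Summable fun i => |μ i| * |L i j| :=
  (summable_abs_mul_abs hμ hL hc).prod_symm.prod_factor j

lemma summable_mul_apply (hμ : Summable fun i => |μ i|)
    (hL : ∀ i, Summable fun j => |L i j|) (hc : ∀ i, ∑' j, |L i j| ≤ c) (j : E) :
    Summable fun i => μ i * L i j :=
  .of_abs (by simpa only [abs_mul] using summable_abs_mul_abs_apply hμ hL hc j)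

lemma abs_tsum_mul_le_tsum_abs_mul_abs (hμ : Summable fun i => |μ i|)
    (hL : ∀ i, Summable fun j => |L i j|) (hc : ∀ i, ∑' j, |L i j| ≤ c) (j : E) :
    |∑' i, μ i * L i j| ≤ ∑' i, |μ i| * |L i j| := by
  simpa only [Real.norm_eq_abs, abs_mul] using norm_tsum_le_tsum_norm (f := fun i => μ i * L i j)
    (by simpa only [Real.norm_eq_abs, abs_mul] using summable_abs_mul_abs_apply hμ hL hc j)

lemma summable_abs_tsum_mul (hμ : Summable fun i => |μ i|)
    (hL : ∀ i, Summable fun j => |L i j|) (hc : ∀ i, ∑' j, |L i j| ≤ c) :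
    Summable fun j => |∑' i, μ i * L i j| :=
  .of_nonneg_of_le (fun _ => abs_nonneg _) (abs_tsum_mul_le_tsum_abs_mul_abs hμ hL hc)
    (summable_abs_mul_abs hμ hL hc).prod_symm.prod

lemma vecNorm_tsum_mul_le (hμ : Summable fun i => |μ i|)
    (hL : ∀ i, Summable fun j => |L i j|) (hc : ∀ i, ∑' j, |L i j| ≤ c) :
    vecNorm (fun j => ∑' i, μ i * L i j) ≤ c * vecNorm μ := by
  have hF := summable_abs_mul_abs hμ hL hc
  calc vecNorm (fun j => ∑' i, μ i * L i j)
      ≤ ∑' j, ∑' i, |μ i| * |L i j| :=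
        Summable.tsum_le_tsum (abs_tsum_mul_le_tsum_abs_mul_abs hμ hL hc)
          (summable_abs_tsum_mul hμ hL hc) hF.prod_symm.prod
    _ = ∑' i, |μ i| * ∑' j, |L i j| := by
        rw [Summable.tsum_comm (f := fun i j => |μ i| * |L i j|) hF]
        simp only [tsum_mul_left]
    _ ≤ ∑' i, |μ i| * c :=
        Summable.tsum_le_tsum (fun i => mul_le_mul_of_nonneg_left (hc i) (abs_nonneg _))
          (by simpa only [tsum_mul_left] using hF.prod) (hμ.mul_right c)
    _ = c * vecNorm μ := by rw [tsum_mul_right, vecNorm, mul_comm]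

end VecMul

lemma mul_vecNorm_le_of_tsum_mul_eq {μ η : E → ℝ} {B : E → E → ℝ} {C D : ℝ}
    (hμs : Summable fun i => |μ i|) (hB0 : ∀ i j, 0 ≤ B i j)
    (hBrow : ∀ i, HasSum (B i) (C - D)) (hμB : ∀ j, ∑' i, μ i * B i j = η j + C * μ j) :
    D * vecNorm μ ≤ vecNorm η := by
  have hBabs : ∀ i, Summable fun j => |B i j| := fun i => by
    simpa only [abs_of_nonneg (hB0 i _)] using (hBrow i).summable
  have hBc : ∀ i, ∑' j, |B i j| ≤ C - D := fun i => by
    simp only [abs_of_nonneg (hB0 i _), (hBrow i).tsum_eq, le_refl]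
  have hsum := summable_abs_tsum_mul hμs hBabs hBc
  have hnorm := vecNorm_tsum_mul_le hμs hBabs hBc
  simp only [hμB] at hsum hnorm
  have hηs : Summable fun j => |η j| :=
    .of_nonneg_of_le (fun _ => abs_nonneg _)
      (fun j => by simpa [abs_mul] using abs_sub (η j + C * μ j) (C * μ j))
      (hsum.add (hμs.mul_left |C|))
  have hCμ : C * vecNorm μ ≤ vecNorm (fun j => η j + C * μ j) + vecNorm η :=
    calc C * vecNorm μ = ∑' j, C * |μ j| := tsum_mul_left.symm
      _ ≤ ∑' j, (|η j + C * μ j| + |η j|) :=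
          Summable.tsum_le_tsum (fun j => by
              have := abs_sub (η j + C * μ j) (η j)
              rw [add_sub_cancel_left, abs_mul] at this
              nlinarith [le_abs_self C, abs_nonneg (μ j)])
            (hμs.mul_left C) (hsum.add hηs)
      _ = vecNorm (fun j => η j + C * μ j) + vecNorm η := Summable.tsum_add hsum hηs
  linarith

theorem IsIntensity.tsum_mul_vecNorm_le_of_le_offDiag {Q : E → E → ℝ} {δ μ η : E → ℝ}
    (hQ : IsIntensity Q) (hQb : UnifBdd Q)
    (hδ : ∀ i j, i ≠ j → δ j ≤ Q i j) (hδ0 : ∀ j, 0 ≤ δ j) (hδs : Summable δ)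
    (hμ : HasSum μ 0) (hμs : Summable fun i => |μ i|)
    (hμQ : ∀ j, HasSum (fun i => μ i * Q i j) (η j)) :
    (∑' k, δ k) * vecNorm μ ≤ vecNorm η := by
  obtain ⟨M, hM⟩ := hQb
  set D := ∑' k, δ k
  set C := M + D
  set B : E → E → ℝ := fun i j => Q i j + (if j = i then C else 0) - δ j
  refine mul_vecNorm_le_of_tsum_mul_eq (B := B) (C := C) hμs (fun i j => ?_) (fun i => ?_)
    (fun j => ?_)
  · by_cases h : j = i
    · subst h
      have := hδs.le_tsum j fun k _ => hδ0 k
      simp only [B, if_true]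
      linarith [hM j]
    · simpa [B, h] using hδ i j (Ne.symm h)
  · simpa using ((hQ.2 i).add (hasSum_ite_eq i C)).sub hδs.hasSum
  · have h := ((hμQ j).add (hasSum_ite_eq j (C * μ j))).sub (hμ.mul_right (δ j))
    rw [zero_mul, sub_zero] at h
    have hfun : (fun i => μ i * B i j)
        = fun i => μ i * Q i j + (if i = j then C * μ j else 0) - μ i * δ j := by
      funext i
      by_cases h : i = j
      · subst h; simp only [B, if_true]; ring
      · simp only [B, h, Ne.symm h, if_false]; ring
    rw [hfun]
    exact h.tsum_eq

theorem stmt14_general {E : Type*} (Q Qt : E → E → ℝ) (pi nu : E → ℝ)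
    (hQ : IsIntensity Q) (hQt : IsIntensity Qt)
    (hQb : UnifBdd Q) (hQtb : UnifBdd Qt)
    (hpi : IsProbVec pi) (hnu : IsProbVec nu)
    (hpiinv : QInvariant pi Q) (hnuinv : QInvariant nu Qt)
    (hpos : 0 < ∑' k, ⨅ i : {i : E // i ≠ k}, Q i.val k) :
    vecNorm (fun i => nu i - pi i) ≤
      rowSumNorm (fun i j => Qt i j - Q i j) /
        ∑' k, ⨅ i : {i : E // i ≠ k}, Q i.val k := by
  have hδs : Summable fun k => ⨅ i : {i : E // i ≠ k}, Q i.val k := by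
    by_contra h
    exact hpos.ne' (tsum_eq_zero_of_not_summable h)
  have hμ : HasSum (fun i => nu i - pi i) 0 := by
    simpa using hnu.hasSum.sub hpi.hasSum
  have hνs : Summable fun i => |nu i| := hnu.hasSum.summable.abs
  have hΔs := hQ.summable_abs_sub hQt
  have hΔc := hQ.tsum_abs_sub_le_rowSumNorm hQt hQb hQtb
  rw [le_div_iff₀ hpos, mul_comm]
  calc _ ≤ vecNorm fun j => -∑' i, nu i * (Qt i j - Q i j) :=
        hQ.tsum_mul_vecNorm_le_of_le_offDiag hQb (fun _ _ => hQ.iInf_offDiag_le)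
          hQ.iInf_offDiag_nonneg hδs hμ hμ.summable.abs
          fun j => hpiinv.hasSum_sub_mul hnuinv (summable_mul_apply hνs hΔs hΔc j)
    _ ≤ _ := by
        simpa only [vecNorm_neg, hnu.vecNorm_eq_one, mul_one] using vecNorm_tsum_mul_le hνs hΔs hΔc

/-- with δ_k = inf_{i ≠ k} Q(i,k), if ∑_k δ_k > 0 then
‖ν − π‖ ≤ ‖Q̃ − Q‖/∑_k δ_k. -/
theorem stmt14 {E : Type*} [Countable E] (Q Qt : E → E → ℝ) (pi nu : E → ℝ)
    (hQ : IsIntensity Q) (hQt : IsIntensity Qt)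
    (hQb : UnifBdd Q) (hQtb : UnifBdd Qt)
    (hQirr : QIrred Q) (hQtirr : QIrred Qt)
    (hpi : IsProbVec pi) (hnu : IsProbVec nu)
    (hpiinv : QInvariant pi Q) (hnuinv : QInvariant nu Qt)
    (hpos : 0 < ∑' k, ⨅ i : {i : E // i ≠ k}, Q i.val k) :
    vecNorm (fun i => nu i - pi i) ≤
      rowSumNorm (fun i j => Qt i j - Q i j) /
        ∑' k, ⨅ i : {i : E // i ≠ k}, Q i.val k :=
  stmt14_general Q Qt pi nu hQ hQt hQb hQtb hpi hnu hpiinv hnuinv hpos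

end
end

section
/- Let σ, μ be real numbers with 0 < σ < μ, and let Q be the M/M/1-queue intensity matrix on ℕ given by Q(0,0) = −σ, Q(0,1) = σ, and for i ≥ 1: Q(i,i−1) = μ, Q(i,i) = −(σ + μ), Q(i,i+1) = σ, with all other entries 0. Define V : ℕ → ℝ by V(i) = (μ/σ)^{i/2} = (√(μ/σ))^i. Then for every i ∈ ℕ: ∑_j Q(i,j)V(j) = −(√μ − √σ)² · V(i) + (μ − √(μσ)) · 1_[i = 0]. In particular, Q satisfies the drift condition D2'(V, λ, b, {0}) with λ = (√μ − √σ)² and b = μ − √(μσ). -/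
open scoped Classical ENNReal NNReal
open Filter MeasureTheory

noncomputable section

variable {E : Type*}

/-- The intensity matrix of the M/M/1 queue with arrival rate σ and service rate μ. -/
def mm1Q (sig mu : ℝ) : ℕ → ℕ → ℝ := fun i j =>
  if i = 0 then (if j = 0 then -sig else if j = 1 then sig else 0)
  else if j = i - 1 then mu
  else if j = i then -(sig + mu)
  else if j = i + 1 then sig
  else 0

/-- for the M/M/1 queue with 0 < σ < μ and V(i) = (√(μ/σ))^i,
∑_j Q(i,j)V(j) = −(√μ − √σ)²·V(i) + (μ − √(μσ))·1_[i=0]; in particular Q satisfies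
D2'(V, (√μ − √σ)², μ − √(μσ), {0}). -/
theorem stmt19 (sig mu : ℝ) (h0 : 0 < sig) (h1 : sig < mu) :
    (∀ i : ℕ, ∑' j : ℕ, mm1Q sig mu i j * Real.sqrt (mu / sig) ^ j =
        -((Real.sqrt mu - Real.sqrt sig) ^ 2) * Real.sqrt (mu / sig) ^ i +
          (mu - Real.sqrt (mu * sig)) * (if i = 0 then 1 else 0)) ∧
      ((∃ δ > (0 : ℝ), ∀ i : ℕ, δ ≤ Real.sqrt (mu / sig) ^ i) ∧
        0 < (Real.sqrt mu - Real.sqrt sig) ^ 2 ∧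
        0 < mu - Real.sqrt (mu * sig) ∧
        (∀ i : ℕ, Summable fun j : ℕ => mm1Q sig mu i j * Real.sqrt (mu / sig) ^ j) ∧
        ∀ i : ℕ, ∑' j : ℕ, mm1Q sig mu i j * Real.sqrt (mu / sig) ^ j ≤
          -((Real.sqrt mu - Real.sqrt sig) ^ 2) * Real.sqrt (mu / sig) ^ i +
            (mu - Real.sqrt (mu * sig)) * (if i = 0 then 1 else 0)) := by
  have hmu : (0:ℝ) < mu := h0.trans h1
  have hs : 0 < Real.sqrt sig := Real.sqrt_pos.2 h0
  have hm : 0 < Real.sqrt mu := Real.sqrt_pos.2 hmu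
  have hsm : Real.sqrt sig < Real.sqrt mu := Real.sqrt_lt_sqrt h0.le h1
  set s := Real.sqrt sig with hsdef
  set m := Real.sqrt mu with hmdef
  have hs2 : s ^ 2 = sig := Real.sq_sqrt h0.le
  have hm2 : m ^ 2 = mu := Real.sq_sqrt hmu.le
  have hr : Real.sqrt (mu / sig) = m / s := Real.sqrt_div hmu.le sig
  have hms : Real.sqrt (mu * sig) = m * s := Real.sqrt_mul hmu.le sig
  have hsne : s ≠ 0 := hs.ne'
  have hsupp : ∀ i : ℕ, ∀ j ∉ ({i - 1, i, i + 1} : Finset ℕ),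
      mm1Q sig mu i j * Real.sqrt (mu / sig) ^ j = 0 := by
    intro i j hj
    simp only [Finset.mem_insert, Finset.mem_singleton, not_or] at hj
    obtain ⟨hj1, hj2, hj3⟩ := hj
    rcases Nat.eq_zero_or_pos i with hi | hi
    · subst hi
      simp [mm1Q, hj2, hj3]
    · have hine : i ≠ 0 := hi.ne'
      simp only [mm1Q, if_neg hine, if_neg hj1, if_neg hj2, if_neg hj3, zero_mul]
  have hsum : ∀ i : ℕ, Summable fun j : ℕ => mm1Q sig mu i j * Real.sqrt (mu / sig) ^ j :=
    fun i => summable_of_ne_finset_zero (hsupp i)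
  have key : ∀ i : ℕ, ∑' j : ℕ, mm1Q sig mu i j * Real.sqrt (mu / sig) ^ j =
      -((m - s) ^ 2) * Real.sqrt (mu / sig) ^ i +
        (mu - m * s) * (if i = 0 then 1 else 0) := by
    intro i
    rw [tsum_eq_sum (hsupp i)]
    rcases Nat.eq_zero_or_pos i with hi | hi
    · subst hi
      norm_num [mm1Q, hr]
      rw [← hs2, ← hm2]
      field_simp
      ring
    · obtain ⟨k, rfl⟩ := Nat.exists_eq_add_of_lt hi
      have h0i : k + 1 ≠ 0 := Nat.succ_ne_zero k
      rw [show (0 : ℕ) + k + 1 = k + 1 by ring] at *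
      have hset : ({k + 1 - 1, k + 1, k + 1 + 1} : Finset ℕ) = {k, k + 1, k + 2} := by
        norm_num
      rw [hset]
      have hne1 : k ≠ k + 1 := by omega
      have hne2 : k ≠ k + 2 := by omega
      have hne3 : k + 1 ≠ k + 2 := by omega
      rw [Finset.sum_insert (by simp [hne1, hne2]), Finset.sum_insert (by simp [hne3]),
        Finset.sum_singleton]
      have e1 : mm1Q sig mu (k+1) k = mu := by simp [mm1Q]
      have e2 : mm1Q sig mu (k+1) (k+1) = -(sig + mu) := by simp [mm1Q]
      have e3 : mm1Q sig mu (k+1) (k+2) = sig := by simp [mm1Q]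
      rw [e1, e2, e3, hr, if_neg h0i]
      have coeff : mu - (sig + mu) * (m / s) + sig * (m / s) ^ 2 = -((m - s) ^ 2) * (m / s) := by
        rw [← hs2, ← hm2]
        field_simp
        ring
      have hp1 : (m / s) ^ (k + 1) = (m / s) ^ k * (m / s) := pow_succ _ _
      have hp2 : (m / s) ^ (k + 2) = (m / s) ^ k * (m / s) ^ 2 := by ring
      rw [hp1, hp2]
      linear_combination ((m / s) ^ k) * coeff
  have hlam : 0 < (m - s) ^ 2 := pow_pos (sub_pos.2 hsm) 2
  have hb : 0 < mu - m * s := by nlinarith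
  refine ⟨fun i => by rw [key i, hms], ⟨1, one_pos, fun i => ?_⟩, hlam,
    by rw [hms]; exact hb, hsum, fun i => le_of_eq (by rw [key i, hms])⟩
  rw [hr]
  exact one_le_pow₀ ((one_le_div hs).2 hsm.le)

end
end
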